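/- Let k ≥ 2 and let H*_2 be the extremal k-graph on 2k vertices (with unique perfect matching {M_1, M_2}, M_1 = {1,…,k}, M_2 = {k+1,…,2k}). Let E be an edge of H*_2 other than M_1 and M_2, and let Ē = {1,…,2k} \ E. Then the hypergraph obtained from H*_2 by replacing E with Ē still has the unique perfect matching {M_1, M_2} and the same number of edges f(k,2), but is not isomorphic to H*_2 (for k ≥ 3 and a suitable choice of E). -/

import Mathlib

open Finset

def Mset (k i : ℕ) : Finset ℕ := Finset.Icc (k * (i - 1) + 1) (k * i)

def Edges (k : ℕ) : ℕ → Finset (Finset ℕ)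
  | 0 => ∅
  | m + 1 =>
      Edges k m ∪
        ((Finset.Icc 1 (k * (m + 1))).powersetCard k).filter
          (fun E => (E ∩ Mset k (m + 1)).Nonempty ∧ k * (m + 1) ∉ E) ∪
        {Mset k (m + 1)}

def b (k l : ℕ) : ℚ :=
  ((l - 1 : ℚ) / l) *
    ∑ i ∈ Finset.range l, (-1 : ℚ) ^ i * (l.choose i) * ((k * (l - i)).choose k)

def f (k m : ℕ) : ℚ := m + ∑ l ∈ Finset.Icc 2 k, b k l * (m.choose l)

/-- The hypergraph obtained from `H*_2` by replacing the edge `E` with its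
complement `Ē = {1,…,2k} \ E`. -/
def Swapped (k : ℕ) (E : Finset ℕ) : Finset (Finset ℕ) :=
  insert (Finset.Icc 1 (k * 2) \ E) ((Edges k 2).erase E)

/-!
An edge of `H*_2` is either `M₂` or a `k`-subset of `{1, …, 2k - 1}`, so `M₂` is the only edge
through the vertex `2k`. For an edge `E ∉ {M₁, M₂}` the complement `Ē` contains `2k` and differs
from `M₂`, so it is a new edge and the number of edges does not change. A perfect matching of a
`k`-uniform hypergraph on `2k` vertices is a complementary pair `{e, V \ e}`; taking `e` through
`2k`, either `e = Ē`, whose partner `E` was removed, or `e = M₂`, whose partner is `M₁`.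
For `E = {2, …, k + 1}` and `k ≥ 3` every vertex of the new hypergraph has degree at least 2,
while `2k` has degree 1 in `H*_2`.
-/

@[simp] lemma Mset_one (k : ℕ) : Mset k 1 = Icc 1 k := by simp [Mset]

@[simp] lemma Mset_two (k : ℕ) : Mset k 2 = Icc (k + 1) (k * 2) := by simp [Mset]

lemma edges_one (k : ℕ) : Edges k 1 = {Icc 1 k} := by
  have hfilter : ((Icc 1 k).powersetCard k).filter
      (fun E => (E ∩ Icc 1 k).Nonempty ∧ k ∉ E) = ∅ := by
    refine filter_eq_empty_iff.2 fun E hE ⟨⟨x, hx⟩, hkE⟩ => hkE ?_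
    rw [mem_powersetCard] at hE
    obtain rfl : E = Icc 1 k := eq_of_subset_of_card_le hE.1 (by simp [hE.2])
    simp only [mem_inter, mem_Icc] at hx ⊢
    omega
  simp only [Edges, zero_add, mul_one, Mset_one, hfilter, empty_union]

lemma edges_two_eq (k : ℕ) :
    Edges k 2 = insert (Icc (k + 1) (k * 2)) ((Icc 1 (k * 2 - 1)).powersetCard k) := by
  have hlow : {Icc 1 k} ∪ ((Icc 1 (k * 2)).powersetCard k).filter
      (fun E => (E ∩ Icc (k + 1) (k * 2)).Nonempty ∧ k * 2 ∉ E) =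
      (Icc 1 (k * 2 - 1)).powersetCard k := by
    ext E
    simp only [mem_union, mem_singleton, mem_filter, mem_powersetCard]
    constructor
    · rintro (rfl | ⟨⟨hsub, hcard⟩, -, htop⟩)
      · refine ⟨fun x hx => ?_, by simp⟩
        simp only [mem_Icc] at hx ⊢
        omega
      · refine ⟨fun x hx => ?_, hcard⟩
        have hx' := hsub hx
        have hne : x ≠ k * 2 := by rintro rfl; exact htop hx
        simp only [mem_Icc] at hx' ⊢
        omega
    · rintro ⟨hsub, hcard⟩
      by_cases hmeet : (E ∩ Icc (k + 1) (k * 2)).Nonempty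
      · refine Or.inr ⟨⟨hsub.trans (Icc_subset_Icc_right (by omega)), hcard⟩, hmeet, fun h => ?_⟩
        have := hsub h
        simp only [mem_Icc] at this
        omega
      · refine Or.inl (eq_of_subset_of_card_le (fun x hx => ?_) (by simp [hcard]))
        have hx' := hsub hx
        have hxM2 : x ∉ Icc (k + 1) (k * 2) := fun h => hmeet ⟨x, mem_inter.2 ⟨hx, h⟩⟩
        simp only [mem_Icc] at hx' hxM2 ⊢
        omega
  rw [show Edges k 2 = Edges k 1 ∪ ((Icc 1 (k * 2)).powersetCard k).filter
      (fun E => (E ∩ Mset k 2).Nonempty ∧ k * 2 ∉ E) ∪ {Mset k 2} from rfl,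
    edges_one, Mset_two, hlow, insert_eq, union_comm]

lemma mem_edges_two_of_mem_powersetCard {k : ℕ} {e : Finset ℕ}
    (he : e ∈ (Icc 1 (k * 2 - 1)).powersetCard k) : e ∈ Edges k 2 :=
  edges_two_eq k ▸ mem_insert_of_mem he

lemma f_two {k : ℕ} (hk : 2 ≤ k) : f k 2 = 1 + ((k * 2 - 1).choose k : ℚ) := by
  have hb : b k 2 = (((k * 2).choose k : ℚ) - 2) / 2 := by
    simp only [b, sum_range_succ, range_one, sum_singleton, Nat.choose_self, mul_one,
      Nat.sub_zero, Nat.add_one_sub_one, Nat.choose_zero_right, Nat.choose_one_right]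
    push_cast
    ring
  have hsplit : Icc 2 k = insert 2 (Icc 3 k) := by
    ext x; simp only [mem_insert, mem_Icc]; omega
  have hchoose : (k * 2).choose k = 2 * (k * 2 - 1).choose k := by
    obtain ⟨j, rfl⟩ : ∃ j, k = j + 1 := ⟨k - 1, by omega⟩
    rw [show (j + 1) * 2 - 1 = 2 * j + 1 by omega, show (j + 1) * 2 = (2 * j + 1) + 1 by ring,
      Nat.choose_succ_succ, Nat.choose_symm_half]
    ring
  rw [f, hsplit, sum_insert (by simp), sum_eq_zero fun l hl => by
    rw [Nat.choose_eq_zero_of_lt (by simp only [mem_Icc] at hl; omega)]; simp, hb, hchoose]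
  push_cast [Nat.choose_self]
  ring

lemma card_edges_two {k : ℕ} (hk : 2 ≤ k) : ((Edges k 2).card : ℚ) = f k 2 := by
  have hM2 : Icc (k + 1) (k * 2) ∉ (Icc 1 (k * 2 - 1)).powersetCard k := fun h => by
    have := (mem_powersetCard.1 h).1 (show k * 2 ∈ Icc (k + 1) (k * 2) by simp; omega)
    simp only [mem_Icc] at this; omega
  rw [edges_two_eq, card_insert_of_notMem hM2, card_powersetCard, Nat.card_Icc, f_two hk,
    Nat.add_sub_cancel]
  push_cast
  ring

lemma edges_two_subset_powersetCard (k : ℕ) :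
    Edges k 2 ⊆ (Icc 1 (k * 2)).powersetCard k := by
  rw [edges_two_eq, insert_subset_iff]
  refine ⟨mem_powersetCard.2 ⟨Icc_subset_Icc_left (by omega), by simp; omega⟩,
    powersetCard_mono (Icc_subset_Icc_right (by omega))⟩

lemma eq_of_top_mem_edges_two {k : ℕ} (hk : 1 ≤ k) {e : Finset ℕ} (he : e ∈ Edges k 2)
    (htop : k * 2 ∈ e) : e = Icc (k + 1) (k * 2) := by
  rw [edges_two_eq, mem_insert] at he
  refine he.resolve_right fun h => ?_
  have := (mem_powersetCard.1 h).1 htop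
  simp only [mem_Icc] at this; omega

lemma Icc_sdiff_Icc_top (k : ℕ) : Icc 1 (k * 2) \ Icc (k + 1) (k * 2) = Icc 1 k := by
  ext x; simp only [mem_sdiff, mem_Icc]; omega

section PerfectMatching

variable {α : Type*} [DecidableEq α]

def IsPerfectMatching (V : Finset α) (P : Finset (Finset α)) : Prop :=
  (∀ e ∈ P, ∀ e' ∈ P, e ≠ e' → Disjoint e e') ∧ P.biUnion id = V

lemma IsPerfectMatching.subset {V : Finset α} {P : Finset (Finset α)}
    (hP : IsPerfectMatching V P) {e : Finset α} (he : e ∈ P) : e ⊆ V :=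
  hP.2 ▸ subset_biUnion_of_mem id he

lemma IsPerfectMatching.eq_pair_sdiff {V : Finset α} {P : Finset (Finset α)} {k : ℕ}
    (hP : IsPerfectMatching V P) (hk : 0 < k) (hV : V.card = k * 2)
    (hcard : ∀ e ∈ P, e.card = k) {e : Finset α} (he : e ∈ P) : P = {e, V \ e} := by
  have hPcard : P.card = 2 := by
    have hsum : ∑ e ∈ P, e.card = V.card := by
      rw [← hP.2, card_biUnion (t := id) fun e he e' he' hne => hP.1 e he e' he' hne]
      rfl
    rw [sum_congr rfl hcard, sum_const, smul_eq_mul, hV] at hsum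
    exact Nat.eq_of_mul_eq_mul_right hk (hsum.trans (mul_comm _ _))
  obtain ⟨e', he', hne⟩ := exists_mem_ne (by omega : 1 < P.card) e
  have he'_eq : e' = V \ e := by
    refine eq_of_subset_of_card_le (fun x hx => mem_sdiff.2 ⟨hP.subset he' hx, fun hxe => ?_⟩) ?_
    · exact disjoint_left.1 (hP.1 e he e' he' hne.symm) hxe hx
    · rw [card_sdiff_of_subset (hP.subset he), hV, hcard e he, hcard e' he']
      omega
  rw [← he'_eq]
  exact (eq_of_subset_of_card_le (insert_subset he (singleton_subset_iff.2 he'))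
    (by rw [hPcard, card_pair hne.symm])).symm

end PerfectMatching

lemma isPerfectMatching_pair (k : ℕ) :
    IsPerfectMatching (Icc 1 (k * 2)) {Icc 1 k, Icc (k + 1) (k * 2)} := by
  have hdisj : Disjoint (Icc 1 k) (Icc (k + 1) (k * 2)) :=
    disjoint_left.2 fun x h1 h2 => by simp only [mem_Icc] at h1 h2; omega
  refine ⟨?_, ?_⟩
  · simp only [mem_insert, mem_singleton]
    rintro e (rfl | rfl) e' (rfl | rfl) hne
    exacts [absurd rfl hne, hdisj, hdisj.symm, absurd rfl hne]
  · ext x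
    simp only [mem_biUnion, mem_insert, mem_singleton, id_eq, or_and_right, exists_or,
      exists_eq_left, mem_Icc]
    omega

section Swapped

variable {k : ℕ} {E : Finset ℕ}

lemma mem_swapped_of_mem_edges_two {e : Finset ℕ} (he : e ∈ Edges k 2) (hne : e ≠ E) :
    e ∈ Swapped k E :=
  mem_insert_of_mem (mem_erase.2 ⟨hne, he⟩)

variable (hE : E ∈ (Icc 1 (k * 2 - 1)).powersetCard k)

include hE

lemma subset_Icc_top : E ⊆ Icc 1 (k * 2) :=
  (mem_powersetCard.1 hE).1.trans (Icc_subset_Icc_right (by omega))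

lemma top_mem_sdiff (hk : 1 ≤ k) : k * 2 ∈ Icc 1 (k * 2) \ E := by
  refine mem_sdiff.2 ⟨by simp; omega, fun h => ?_⟩
  have := (mem_powersetCard.1 hE).1 h
  simp only [mem_Icc] at this; omega

lemma notMem_swapped (hk : 1 ≤ k) : E ∉ Swapped k E := by
  rw [Swapped, mem_insert, not_or]
  exact ⟨(ne_of_mem_of_not_mem' (top_mem_sdiff hE hk) (mem_sdiff.1 (top_mem_sdiff hE hk)).2).symm,
    notMem_erase E _⟩

lemma sdiff_notMem_edges_two (hk : 1 ≤ k) (hE1 : E ≠ Icc 1 k) :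
    Icc 1 (k * 2) \ E ∉ Edges k 2 := by
  intro h
  refine hE1 ?_
  rw [← Finset.sdiff_sdiff_eq_self (subset_Icc_top hE),
    eq_of_top_mem_edges_two hk h (top_mem_sdiff hE hk), Icc_sdiff_Icc_top]

lemma swapped_subset_powersetCard : Swapped k E ⊆ (Icc 1 (k * 2)).powersetCard k := by
  rw [Swapped, insert_subset_iff]
  refine ⟨mem_powersetCard.2 ⟨sdiff_subset, ?_⟩,
    (erase_subset _ _).trans (edges_two_subset_powersetCard k)⟩
  rw [card_sdiff_of_subset (subset_Icc_top hE), Nat.card_Icc, (mem_powersetCard.1 hE).2]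
  omega

lemma card_swapped (hk : 1 ≤ k) (hE1 : E ≠ Icc 1 k) :
    (Swapped k E).card = (Edges k 2).card := by
  rw [Swapped,
    card_insert_of_notMem fun h => sdiff_notMem_edges_two hE hk hE1 (mem_of_mem_erase h),
    card_erase_add_one (mem_edges_two_of_mem_powersetCard hE)]

lemma pair_subset_swapped (hk : 1 ≤ k) (hE1 : E ≠ Icc 1 k) :
    {Icc 1 k, Icc (k + 1) (k * 2)} ⊆ Swapped k E := by
  refine insert_subset_iff.2 ⟨mem_swapped_of_mem_edges_two ?_ hE1.symm,
    singleton_subset_iff.2 (mem_swapped_of_mem_edges_two (edges_two_eq k ▸ mem_insert_self _ _) ?_)⟩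
  · exact mem_edges_two_of_mem_powersetCard
      (mem_powersetCard.2 ⟨Icc_subset_Icc_right (by omega), by simp⟩)
  · rintro rfl
    exact (mem_sdiff.1 (top_mem_sdiff hE hk)).2 (by simp; omega)

lemma eq_pair_of_isPerfectMatching_swapped (hk : 1 ≤ k) {P : Finset (Finset ℕ)}
    (hPsub : P ⊆ Swapped k E) (hP : IsPerfectMatching (Icc 1 (k * 2)) P) :
    P = {Icc 1 k, Icc (k + 1) (k * 2)} := by
  obtain ⟨e, he, htop⟩ : ∃ e ∈ P, k * 2 ∈ e := by
    have : k * 2 ∈ P.biUnion id := hP.2 ▸ (by simp; omega)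
    simpa using this
  have hP_eq := hP.eq_pair_sdiff hk (by simp)
    (fun e he => (mem_powersetCard.1 (swapped_subset_powersetCard hE (hPsub he))).2) he
  rcases mem_insert.1 (hPsub he) with rfl | he'
  · refine absurd (hPsub ?_) (notMem_swapped hE hk)
    rw [hP_eq, Finset.sdiff_sdiff_eq_self (subset_Icc_top hE)]
    exact mem_insert_of_mem (mem_singleton_self E)
  · rw [hP_eq, eq_of_top_mem_edges_two hk (mem_of_mem_erase he') htop, Icc_sdiff_Icc_top, pair_comm]

end Swapped

section Degree

variable {α : Type*} [DecidableEq α]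

def degree (H : Finset (Finset α)) (v : α) : ℕ := (H.filter (v ∈ ·)).card

lemma degree_image_perm (σ : Equiv.Perm α) (H : Finset (Finset α)) (v : α) :
    degree (H.image (fun e => e.image σ)) (σ v) = degree H v := by
  rw [degree, filter_image, card_image_of_injective _ (image_injective σ.injective)]
  simp only [σ.injective.mem_finset_image]
  rfl

end Degree

lemma degree_edges_two_top {k : ℕ} (hk : 1 ≤ k) : degree (Edges k 2) (k * 2) = 1 :=
  card_eq_one.2 ⟨Icc (k + 1) (k * 2), eq_singleton_iff_unique_mem.2
    ⟨mem_filter.2 ⟨edges_two_eq k ▸ mem_insert_self _ _, by simp; omega⟩,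
      fun _ he => eq_of_top_mem_edges_two hk (mem_filter.1 he).1 (mem_filter.1 he).2⟩⟩

section NonIsomorphic

variable {k : ℕ}

lemma Icc_two_mem_powersetCard (hk : 2 ≤ k) :
    Icc 2 (k + 1) ∈ (Icc 1 (k * 2 - 1)).powersetCard k :=
  mem_powersetCard.2 ⟨Icc_subset_Icc (by omega) (by omega), by simp⟩

lemma Icc_two_ne_Icc_one (hk : 1 ≤ k) : Icc 2 (k + 1) ≠ Icc 1 k :=
  ne_of_mem_of_not_mem' (a := k + 1) (by simp; omega) (by simp)

lemma two_le_degree_swapped (hk : 3 ≤ k) {v : ℕ} (hv : v ∈ Icc 1 (k * 2)) :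
    2 ≤ degree (Swapped k (Icc 2 (k + 1))) v := by
  have hE := Icc_two_mem_powersetCard (by omega : 2 ≤ k)
  have hM := pair_subset_swapped hE (by omega) (Icc_two_ne_Icc_one (by omega))
  have hM1 : Icc 1 k ∈ Swapped k (Icc 2 (k + 1)) := hM (mem_insert_self _ _)
  have hM2 : Icc (k + 1) (k * 2) ∈ Swapped k (Icc 2 (k + 1)) :=
    hM (mem_insert_of_mem (mem_singleton_self _))
  have hD : ∀ u ∈ Icc 1 k, insert u (Icc (k + 1) (k * 2 - 1)) ∈ Swapped k (Icc 2 (k + 1)) := by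
    intro u hu
    simp only [mem_Icc] at hu
    have hsub : insert u (Icc (k + 1) (k * 2 - 1)) ⊆ Icc 1 (k * 2 - 1) :=
      insert_subset_iff.2 ⟨by simp; omega, Icc_subset_Icc_left (by omega)⟩
    have hcard : (insert u (Icc (k + 1) (k * 2 - 1))).card = k := by
      rw [card_insert_of_notMem (by simp; omega), Nat.card_Icc]
      omega
    exact mem_swapped_of_mem_edges_two
      (mem_edges_two_of_mem_powersetCard (mem_powersetCard.2 ⟨hsub, hcard⟩))
      (ne_of_mem_of_not_mem' (a := k * 2 - 1) (by simp; omega) (by simp; omega))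
  suffices ∃ a ∈ Swapped k (Icc 2 (k + 1)), ∃ b ∈ Swapped k (Icc 2 (k + 1)),
      a ≠ b ∧ v ∈ a ∧ v ∈ b by
    obtain ⟨a, ha, b, hb, hab, hva, hvb⟩ := this
    exact one_lt_card.2 ⟨a, mem_filter.2 ⟨ha, hva⟩, b, mem_filter.2 ⟨hb, hvb⟩, hab⟩
  simp only [mem_Icc] at hv
  rcases Nat.lt_or_ge k v with hvk | hvk
  · rcases Nat.lt_or_ge v (k * 2) with hv2 | hv2
    · exact ⟨_, hM2, _, hD k (by simp; omega),
        (ne_of_mem_of_not_mem' (a := k) (by simp) (by simp)).symm, by simp; omega, by simp; omega⟩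
    · exact ⟨_, hM2, _, mem_insert_self _ _,
        (ne_of_mem_of_not_mem' (a := 1) (by simp; omega) (by simp)).symm, by simp; omega,
        by simp; omega⟩
  · exact ⟨_, hM1, _, hD v (by simp; omega),
      (ne_of_mem_of_not_mem' (a := k + 1) (by simp; omega) (by simp)).symm, by simp; omega, by simp⟩

lemma not_exists_perm_image_swapped_eq_edges_two (hk : 3 ≤ k) :
    ¬ ∃ σ : Equiv.Perm ℕ, (Swapped k (Icc 2 (k + 1))).image (fun e => e.image σ) = Edges k 2 := by
  rintro ⟨σ, hσ⟩
  have hdeg : degree (Swapped k (Icc 2 (k + 1))) (σ.symm (k * 2)) = 1 := by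
    rw [← degree_image_perm σ, hσ, σ.apply_symm_apply, degree_edges_two_top (by omega)]
  obtain ⟨e, he⟩ := card_pos.1 (hdeg ▸ one_pos : 0 < degree _ _)
  have hv : σ.symm (k * 2) ∈ Icc 1 (k * 2) :=
    (mem_powersetCard.1 (swapped_subset_powersetCard (Icc_two_mem_powersetCard (by omega))
      (mem_filter.1 he).1)).1 (mem_filter.1 he).2
  have := two_le_degree_swapped hk hv
  omega

end NonIsomorphic

theorem stmt_15 (k : ℕ) (hk : 2 ≤ k) :
    (∀ E ∈ Edges k 2, E ≠ Mset k 1 → E ≠ Mset k 2 →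
      -- `{M_1, M_2}` is still the unique perfect matching:
      (({Mset k 1, Mset k 2} : Finset (Finset ℕ)) ⊆ Swapped k E ∧
        (∀ e ∈ ({Mset k 1, Mset k 2} : Finset (Finset ℕ)),
          ∀ e' ∈ ({Mset k 1, Mset k 2} : Finset (Finset ℕ)), e ≠ e' → Disjoint e e') ∧
        ({Mset k 1, Mset k 2} : Finset (Finset ℕ)).biUnion id = Finset.Icc 1 (k * 2)) ∧
      (∀ P : Finset (Finset ℕ),
        P ⊆ Swapped k E → (∀ e ∈ P, ∀ e' ∈ P, e ≠ e' → Disjoint e e') →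
          P.biUnion id = Finset.Icc 1 (k * 2) →
            P = ({Mset k 1, Mset k 2} : Finset (Finset ℕ))) ∧
      -- same number of edges:
      ((Swapped k E).card : ℚ) = f k 2) ∧
    -- for `k ≥ 3` a suitable choice of `E` gives a non-isomorphic example:
    (3 ≤ k → ∃ E ∈ Edges k 2, E ≠ Mset k 1 ∧ E ≠ Mset k 2 ∧
      ¬ ∃ σ : Equiv.Perm ℕ,
        (Swapped k E).image (fun e => e.image σ) = Edges k 2) := by
  simp only [Mset_one, Mset_two]
  refine ⟨fun E hE hE1 hE2 => ?_, fun hk3 => ⟨Icc 2 (k + 1),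
    mem_edges_two_of_mem_powersetCard (Icc_two_mem_powersetCard hk),
    Icc_two_ne_Icc_one (by omega), ne_of_mem_of_not_mem' (a := 2) (by simp; omega) (by simp; omega),
    not_exists_perm_image_swapped_eq_edges_two hk3⟩⟩
  have hE' : E ∈ (Icc 1 (k * 2 - 1)).powersetCard k :=
    (mem_insert.1 (edges_two_eq k ▸ hE)).resolve_left hE2
  exact ⟨⟨pair_subset_swapped hE' (by omega) hE1, isPerfectMatching_pair k⟩,
    fun P hP hdisj hcover =>
      eq_pair_of_isPerfectMatching_swapped hE' (by omega) hP ⟨hdisj, hcover⟩,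
    by rw [card_swapped hE' (by omega) hE1, card_edges_two hk]⟩
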